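/- Fix f, b ∈ ℝ³ with f · b = 0 and ‖f‖² - ‖b‖² = 1 and b ≠ 0. The set of (c₀, c) ∈ ℝ × ℝ³ satisfying c₀ f + b × c = 0, f · c = 0, and ‖c‖² - c₀² = 1 has its c-component lying in the plane orthogonal to f, and in orthonormal coordinates (with first axis along b, second along f × b/‖f × b‖) the c-components form the ellipse {(u,v) : u² + v²/‖f‖² = 1}, with semi-axes of lengths 1 and ‖f‖. -/

import Mathlib

/-!
Since `f` is orthogonal to both `b` and `c`, the vector `b ⨯₃ c` is parallel to `f`, namely
`(f ⬝ᵥ f) • b ⨯₃ c = w • f` with `w = c ⬝ᵥ f ⨯₃ b`. Hence `c₀ = -w / ‖f‖²` is forced, and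
Lagrange's identity `‖b ⨯₃ c‖² = ‖b‖²‖c‖² - (b ⬝ᵥ c)²` together with `‖f‖² - ‖b‖² = 1` turns the
ellipse equation into `‖c‖² - c₀² = 1`.
-/

open Matrix

section CrossProduct

variable {R : Type*}

theorem smul_cross_eq_of_dotProduct_eq_zero [CommRing R] {f b c : Fin 3 → R}
    (hfb : f ⬝ᵥ b = 0) (hfc : f ⬝ᵥ c = 0) :
    (f ⬝ᵥ f) • b ⨯₃ c = (c ⬝ᵥ f ⨯₃ b) • f := by
  have hparallel : f ⨯₃ (b ⨯₃ c) = 0 := by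
    simp [cross_cross_eq_smul_sub_smul', hfc, dotProduct_comm b f, hfb]
  have h := cross_cross_eq_smul_sub_smul' f f (b ⨯₃ c)
  rw [hparallel, map_zero, triple_product_permutation f b c,
    triple_product_permutation b c f] at h
  linear_combination (norm := module) h

variable [Field R] {f b c : Fin 3 → R}

theorem mul_cross_dot_cross_eq_sq (hfb : f ⬝ᵥ b = 0) (hfc : f ⬝ᵥ c = 0) (hf : f ⬝ᵥ f ≠ 0) :
    (f ⬝ᵥ f) * (b ⨯₃ c ⬝ᵥ b ⨯₃ c) = (c ⬝ᵥ f ⨯₃ b) ^ 2 := by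
  have h := congrArg (fun v => v ⬝ᵥ v) (smul_cross_eq_of_dotProduct_eq_zero hfb hfc)
  simp only [smul_dotProduct, dotProduct_smul, smul_eq_mul] at h
  exact mul_left_cancel₀ hf (by linear_combination h)

theorem exists_smul_add_cross_eq_zero_iff (hfb : f ⬝ᵥ b = 0) (hf : f ⬝ᵥ f ≠ 0) :
    (∃ c₀ : R, c₀ • f + b ⨯₃ c = 0 ∧ f ⬝ᵥ c = 0 ∧ c ⬝ᵥ c - c₀ ^ 2 = 1) ↔
      f ⬝ᵥ c = 0 ∧ c ⬝ᵥ c - ((c ⬝ᵥ f ⨯₃ b) / (f ⬝ᵥ f)) ^ 2 = 1 := by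
  constructor
  · rintro ⟨c₀, hcross, hfc, hnorm⟩
    have hdot := congrArg (f ⬝ᵥ ·) hcross
    simp only [dotProduct_add, dotProduct_smul, smul_eq_mul, dotProduct_zero,
      triple_product_permutation f b c, triple_product_permutation b c f] at hdot
    have hc₀ : c₀ = -((c ⬝ᵥ f ⨯₃ b) / (f ⬝ᵥ f)) := by
      field_simp
      linear_combination hdot
    exact ⟨hfc, by rwa [hc₀, neg_sq] at hnorm⟩
  · rintro ⟨hfc, hnorm⟩
    refine ⟨-((c ⬝ᵥ f ⨯₃ b) / (f ⬝ᵥ f)), ?_, hfc, by rwa [neg_sq]⟩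
    have h := smul_cross_eq_of_dotProduct_eq_zero hfb hfc
    rw [neg_smul, neg_add_eq_zero, div_eq_inv_mul, mul_smul, ← h, inv_smul_smul₀ hf]

theorem ellipse_form_eq_dotProduct_self_sub_sq (hfb : f ⬝ᵥ b = 0) (hfc : f ⬝ᵥ c = 0)
    (hnorm : f ⬝ᵥ f - b ⬝ᵥ b = 1) (hb : b ⬝ᵥ b ≠ 0) (hf : f ⬝ᵥ f ≠ 0) :
    (c ⬝ᵥ b) ^ 2 / (b ⬝ᵥ b) + (c ⬝ᵥ f ⨯₃ b) ^ 2 / (f ⨯₃ b ⬝ᵥ f ⨯₃ b) / (f ⬝ᵥ f) =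
      c ⬝ᵥ c - ((c ⬝ᵥ f ⨯₃ b) / (f ⬝ᵥ f)) ^ 2 := by
  have h := mul_cross_dot_cross_eq_sq hfb hfc hf
  rw [cross_dot_cross, dotProduct_comm b c] at h
  rw [cross_dot_cross, hfb]
  field_simp
  linear_combination -((f ⬝ᵥ f) ^ 2 * (b ⬝ᵥ b)) * h -
    ((f ⬝ᵥ f) * (b ⬝ᵥ b) * (c ⬝ᵥ f ⨯₃ b) ^ 2) * hnorm
end CrossProduct

theorem sq_dotProduct_inv_sqrt_smul {n : Type*} [Fintype n] (c v : n → ℝ) :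
    (c ⬝ᵥ (Real.sqrt (v ⬝ᵥ v))⁻¹ • v) ^ 2 = (c ⬝ᵥ v) ^ 2 / (v ⬝ᵥ v) := by
  have hv : 0 ≤ v ⬝ᵥ v := Finset.sum_nonneg fun i _ => mul_self_nonneg (v i)
  rw [dotProduct_smul, smul_eq_mul, mul_pow, inv_pow, Real.sq_sqrt hv, inv_mul_eq_div]

theorem stmt15 (f b : Fin 3 → ℝ) (hfb : f ⬝ᵥ b = 0)
    (hnorm : f ⬝ᵥ f - b ⬝ᵥ b = 1) (hb : b ≠ 0) :
    {c : Fin 3 → ℝ | ∃ c₀ : ℝ,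
        c₀ • f + crossProduct b c = 0 ∧ f ⬝ᵥ c = 0 ∧ c ⬝ᵥ c - c₀ ^ 2 = 1} =
      {c : Fin 3 → ℝ | f ⬝ᵥ c = 0 ∧
        (c ⬝ᵥ ((Real.sqrt (b ⬝ᵥ b))⁻¹ • b)) ^ 2 +
          (c ⬝ᵥ ((Real.sqrt (crossProduct f b ⬝ᵥ crossProduct f b))⁻¹ • crossProduct f b)) ^ 2
            / (f ⬝ᵥ f) = 1} := by
  have hB : b ⬝ᵥ b ≠ 0 := dotProduct_self_eq_zero.not.mpr hb
  have hF : f ⬝ᵥ f ≠ 0 := by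
    have : 0 ≤ b ⬝ᵥ b := Finset.sum_nonneg fun i _ => mul_self_nonneg (b i)
    linarith
  ext c
  simp only [Set.mem_ofPred_eq, sq_dotProduct_inv_sqrt_smul,
    exists_smul_add_cross_eq_zero_iff hfb hF]
  exact and_congr_right fun hfc => by
    rw [ellipse_form_eq_dotProduct_self_sub_sq hfb hfc hnorm hB hF]
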